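/- Let Σ be a nonempty countable locally finite graph, fix a vertex o and n ≥ 1, and let π be a fibration from a countable locally finite graph Λ onto Σ with x ∈ π⁻¹(o). For p ∈ [0,1], perform independent site percolation with parameter p on Λ and on Σ. Then the probability that there is an open self-avoiding path of length n in Λ starting at x is at least the probability that there is an open self-avoiding path of length n in Σ starting at o. -/

import Mathlib

open MeasureTheory ProbabilityTheory

/-- Bernoulli measure of parameter `p` on `Bool`. -/
noncomputable def bern (p : ENNReal) : Measure Bool :=
  p • Measure.dirac true + (1 - p) • Measure.dirac false

/-- `P` is the law of an i.i.d. family of Bernoulli(p) random variables indexed by `ι`: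
all finite-dimensional marginals are product Bernoulli measures. -/
def iidMarginals {ι : Type*} (p : ENNReal) (P : Measure (ι → Bool)) : Prop :=
  IsProbabilityMeasure P ∧ ∀ s : Finset ι,
    P.map (fun ω (i : s) => ω i) = Measure.pi (fun _ : s => bern p)

/-- The open cluster of `v` in site percolation with configuration `ω`. -/
def siteCluster {V : Type*} (G : SimpleGraph V) (ω : V → Bool) (v : V) : Set V :=
  {w | ∃ wk : G.Walk v w, ∀ u ∈ wk.support, ω u = true}

/-- Some site-percolation cluster is infinite. -/
def sitePercolates {V : Type*} (G : SimpleGraph V) (ω : V → Bool) : Prop :=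
  ∃ v, (siteCluster G ω v).Infinite

/-- The critical parameter of site percolation. -/
noncomputable def pcSite {V : Type*} (G : SimpleGraph V) : ENNReal :=
  sSup {p | p ≤ 1 ∧ ∀ P : Measure (V → Bool), iidMarginals p P →
    P {ω | sitePercolates G ω} = 0}

/-- The open cluster of `v` in bond percolation with configuration `ω`. -/
def bondCluster {V : Type*} (G : SimpleGraph V) (ω : Sym2 V → Bool) (v : V) : Set V :=
  {w | ∃ wk : G.Walk v w, ∀ e ∈ wk.edges, ω e = true}

/-- Some bond-percolation cluster is infinite. -/
def bondPercolates {V : Type*} (G : SimpleGraph V) (ω : Sym2 V → Bool) : Prop :=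
  ∃ v, (bondCluster G ω v).Infinite

/-- The critical parameter of bond percolation. -/
noncomputable def pcBond {V : Type*} (G : SimpleGraph V) : ENNReal :=
  sSup {p | p ≤ 1 ∧ ∀ P : Measure (Sym2 V → Bool), iidMarginals p P →
    P {ω | bondPercolates G ω} = 0}

/-- A fibration from `Λ` to `S`. -/
def IsFibration {VL VS : Type*} (Λ : SimpleGraph VL) (S : SimpleGraph VS)
    (π : VL → VS) : Prop :=
  Function.Surjective π ∧
    ∀ x : VL, ∀ v : VS, S.Adj (π x) v → ∃ y : VL, Λ.Adj x y ∧ π y = v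

/-- There is an open self-avoiding path of length `n` starting at `v`. -/
def OpenSAP {V : Type*} (G : SimpleGraph V) (ω : V → Bool) (v : V) (n : ℕ) : Prop :=
  ∃ w : V, ∃ wk : G.Walk v w, wk.IsPath ∧ wk.length = n ∧ ∀ u ∈ wk.support, ω u = true

/-!
Every self-avoiding path of `S` from `o` lifts to a walk of `Λ` from `x` with the same projection;
such a lift is self-avoiding and `π` is injective on its support. So it suffices to show, in finite
windows, that the probability that some member of a family `T` of sets is open in `Λ` is at least
the probability that some image `π '' t` is open in `S`, when `π` is injective on each `t ∈ T`.
Revealing the sites `a` of `S` one at a time, percolation on `S` becomes percolation on `Λ` in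
which all the sites of the fibre over `a` share one coin. Each witness meets a fibre in at most one
site, and for such increasing events giving the fibre independent coins can only increase the
probability: this is a submodularity (inclusion–exclusion) argument, by induction on the fibre.
-/

open scoped ENNReal Finset

lemma ENNReal.mul_add_one_sub_mul_le_of_add_le {p m r h g : ℝ≥0∞} (hp : p ≤ 1)
    (hmr : m + r ≤ h + g) :
    p * m + (1 - p) * r ≤ p * (p * m + (1 - p) * h) + (1 - p) * (p * g + (1 - p) * r) := by
  set q := 1 - p
  have hpq : p + q = 1 := add_tsub_cancel_of_le hp
  calc p * m + q * r = p * (p + q) * m + q * (p + q) * r := by rw [hpq, mul_one, mul_one]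
    _ = p * p * m + q * q * r + p * q * (m + r) := by ring
    _ ≤ p * p * m + q * q * r + p * q * (h + g) := by gcongr
    _ = p * (p * m + q * h) + q * (p * g + q * r) := by ring

section FiniteWindow

variable {V : Type*} [DecidableEq V] {p : ℝ≥0∞}

noncomputable def bernWeight (p : ℝ≥0∞) (A s : Finset V) : ℝ≥0∞ :=
  p ^ #s * (1 - p) ^ #(A \ s)

/-- The probability, under Bernoulli(`p`) site percolation on the finite window `A`, that the set
of open sites belongs to `E`. -/
noncomputable def bernProb (p : ℝ≥0∞) (A : Finset V) (E : Set (Finset V)) : ℝ≥0∞ :=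
  ∑ s ∈ A.powerset, E.indicator (bernWeight p A) s

lemma bernWeight_insert_of_subset {A s : Finset V} {a : V} (ha : a ∉ A) (hs : s ⊆ A) :
    bernWeight p (insert a A) s = (1 - p) * bernWeight p A s := by
  rw [bernWeight, bernWeight, Finset.insert_sdiff_of_notMem _ (fun h => ha (hs h)),
    Finset.card_insert_of_notMem (fun h => ha (Finset.sdiff_subset h)), pow_succ]
  ring

lemma bernWeight_insert_insert {A s : Finset V} {a : V} (ha : a ∉ A) (hs : s ⊆ A) :
    bernWeight p (insert a A) (insert a s) = p * bernWeight p A s := by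
  rw [bernWeight, bernWeight, Finset.insert_sdiff_insert, Finset.sdiff_insert_of_notMem ha,
    Finset.card_insert_of_notMem (fun h => ha (hs h)), pow_succ]
  ring

lemma bernProb_empty (E : Set (Finset V)) : bernProb p ∅ E = E.indicator 1 ∅ := by
  rw [bernProb, Finset.powerset_empty, Finset.sum_singleton]
  by_cases h : ∅ ∈ E <;> simp [h, bernWeight]

lemma bernProb_insert {A : Finset V} {a : V} (ha : a ∉ A) (E : Set (Finset V)) :
    bernProb p (insert a A) E =
      p * bernProb p A (insert a ⁻¹' E) + (1 - p) * bernProb p A E := by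
  have hinj : Set.InjOn (insert a) (A.powerset : Set (Finset V)) := fun s hs t ht hst => by
    rw [← Finset.erase_insert (fun h => ha (Finset.mem_powerset.1 hs h)),
      ← Finset.erase_insert (fun h => ha (Finset.mem_powerset.1 ht h)), hst]
  have hdisj : Disjoint A.powerset (A.powerset.image (insert a)) :=
    Finset.disjoint_left.2 fun s hs hs' => by
      obtain ⟨t, -, rfl⟩ := Finset.mem_image.1 hs'
      exact ha (Finset.mem_powerset.1 hs (Finset.mem_insert_self a t))
  rw [bernProb, Finset.powerset_insert, Finset.sum_union hdisj, Finset.sum_image hinj, add_comm,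
    bernProb, bernProb, Finset.mul_sum, Finset.mul_sum]
  congr 1 <;> refine Finset.sum_congr rfl fun s hs => ?_
  · by_cases h : insert a s ∈ E <;>
      simp [h, bernWeight_insert_insert ha (Finset.mem_powerset.1 hs)]
  · by_cases h : s ∈ E <;> simp [h, bernWeight_insert_of_subset ha (Finset.mem_powerset.1 hs)]

lemma bernProb_mono {A : Finset V} {E E' : Set (Finset V)} (h : ∀ s ⊆ A, s ∈ E → s ∈ E') :
    bernProb p A E ≤ bernProb p A E' :=
  Finset.sum_le_sum fun s hs => by
    by_cases hE : s ∈ E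
    · simp [Set.indicator_of_mem hE, Set.indicator_of_mem (h s (Finset.mem_powerset.1 hs) hE)]
    · simp [Set.indicator_of_notMem hE]

lemma bernProb_univ (hp : p ≤ 1) (A : Finset V) : bernProb p A Set.univ = 1 := by
  induction A using Finset.induction_on with
  | empty => simp [bernProb_empty]
  | insert a A ha ih =>
    rw [bernProb_insert ha, Set.preimage_univ, ih, mul_one, mul_one, add_tsub_cancel_of_le hp]

lemma bernProb_le_one (hp : p ≤ 1) (A : Finset V) (E : Set (Finset V)) : bernProb p A E ≤ 1 :=
  (bernProb_mono fun _ _ _ => Set.mem_univ _).trans_eq (bernProb_univ hp A)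

lemma bernProb_empty_le {W : Type*} [DecidableEq W] (hp : p ≤ 1) (B : Finset W)
    {E : Set (Finset V)} {E' : Set (Finset W)}
    (hE' : IsUpperSet E') (h : ∅ ∈ E → ∅ ∈ E') : bernProb p ∅ E ≤ bernProb p B E' := by
  by_cases hE : ∅ ∈ E
  · rw [Set.eq_univ_of_forall fun s => hE' (Finset.empty_subset s) (h hE), bernProb_univ hp]
    exact bernProb_le_one hp _ _
  · simp [bernProb_empty, hE]

lemma bernProb_union_add_inter (A : Finset V) (E E' : Set (Finset V)) :
    bernProb p A (E ∪ E') + bernProb p A (E ∩ E') = bernProb p A E + bernProb p A E' := by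
  simp only [bernProb, ← Finset.sum_add_distrib]
  refine Finset.sum_congr rfl fun s _ => ?_
  by_cases hE : s ∈ E <;> by_cases hE' : s ∈ E' <;> simp [hE, hE', add_comm]

lemma IsUpperSet.insert_mem_or_union_mem {E : Set (Finset V)} (hE : IsUpperSet E) {b : V}
    {F s : Finset V} (hEF : ∀ s ∈ E, ∃ t ∈ E, t ⊆ s ∧ #(t ∩ insert b F) ≤ 1)
    (hs : s ∪ insert b F ∈ E) : insert b s ∈ E ∨ s ∪ F ∈ E := by
  obtain ⟨t, htE, hts, htF⟩ := hEF _ hs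
  by_cases hbt : b ∈ t
  · refine Or.inl (hE (fun z hz => ?_) htE)
    by_cases hzs : z ∈ s
    · exact Finset.mem_insert_of_mem hzs
    · have hzF : z ∈ insert b F := (Finset.mem_union.1 (hts hz)).resolve_left hzs
      exact Finset.mem_insert.2 (Or.inl (Finset.card_le_one.1 htF z (Finset.mem_inter.2 ⟨hz, hzF⟩)
        b (Finset.mem_inter.2 ⟨hbt, Finset.mem_insert_self b F⟩)))
  · refine Or.inr (hE (fun z hz => ?_) htE)
    have := hts hz
    simp only [Finset.mem_union, Finset.mem_insert] at this ⊢
    grind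

/-- The left-hand side is the probability of `E` when all the sites of `F` share one coin. -/
lemma bernProb_merge_le (hp : p ≤ 1) {B F : Finset V} (hFB : Disjoint F B)
    {E : Set (Finset V)} (hE : IsUpperSet E) (hEF : ∀ s ∈ E, ∃ t ∈ E, t ⊆ s ∧ #(t ∩ F) ≤ 1) :
    p * bernProb p B {s | s ∪ F ∈ E} + (1 - p) * bernProb p B E ≤ bernProb p (F ∪ B) E := by
  induction F using Finset.induction_on generalizing E with
  | empty =>
    simp only [Finset.union_empty, Finset.empty_union, Set.ofPred_mem_eq]
    rw [← add_mul, add_tsub_cancel_of_le hp, one_mul]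
  | insert b F hb ih =>
    obtain ⟨hbB, hFB⟩ := Finset.disjoint_insert_left.1 hFB
    set H : Set (Finset V) := insert b ⁻¹' E
    set G : Set (Finset V) := {s | s ∪ F ∈ E}
    have hH : IsUpperSet H := fun s t hst hs => hE (Finset.insert_subset_insert b hst) hs
    have ihH := ih (E := H) hFB hH fun s hs => by
      obtain ⟨t, htE, hts, htF⟩ := hEF _ hs
      refine ⟨t.erase b, hE (Finset.insert_erase_subset b t) htE,
        Finset.subset_insert_iff.1 hts, (Finset.card_le_card fun z => ?_).trans htF⟩
      simp only [Finset.mem_inter, Finset.mem_erase, Finset.mem_insert]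
      tauto
    have ihE := ih hFB hE fun s hs => by
      obtain ⟨t, htE, hts, htF⟩ := hEF s hs
      exact ⟨t, htE, hts, (Finset.card_le_card (Finset.inter_subset_inter_left
        (Finset.subset_insert b F))).trans htF⟩
    have hsub : bernProb p B {s | s ∪ F ∈ H} + bernProb p B E ≤
        bernProb p B H + bernProb p B G := by
      rw [← bernProb_union_add_inter B H G]
      refine add_le_add (bernProb_mono fun s _ hs => ?_) (bernProb_mono fun s _ hs => ?_)
      · exact hE.insert_mem_or_union_mem hEF (by rwa [Finset.union_insert])
      · exact ⟨hE (Finset.subset_insert b s) hs, hE Finset.subset_union_left hs⟩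
    rw [Finset.insert_union, bernProb_insert (Finset.notMem_union.2 ⟨hb, hbB⟩)]
    simp only [Finset.union_insert]
    exact (ENNReal.mul_add_one_sub_mul_le_of_add_le hp hsub).trans (by gcongr)

section Image

variable {VL VS : Type*} [DecidableEq VS] (π : VL → VS)

lemma card_inter_filter_eq_le_one [DecidableEq VL] {t : Finset VL} (ht : Set.InjOn π t)
    (B : Finset VL) (a : VS) :
    #(t ∩ {b ∈ B | π b = a}) ≤ 1 :=
  Finset.card_le_one.2 fun y hy y' hy' => by
    rw [Finset.mem_inter, Finset.mem_filter] at hy hy'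
    exact ht hy.1 hy'.1 (hy.2.2.trans hy'.2.2.symm)

lemma preimage_insert_upperClosure_image_subset (a : VS) (T : Set (Finset VL)) :
    insert a ⁻¹' (upperClosure (Finset.image π '' T) : Set (Finset VS)) ⊆
      upperClosure (Finset.image π '' ((fun t : Finset VL => {b ∈ t | π b ≠ a}) '' T)) := by
  intro u hu
  obtain ⟨_, ⟨t, ht, rfl⟩, htu⟩ := mem_upperClosure.1 hu
  refine mem_upperClosure.2 ⟨_, ⟨_, ⟨t, ht, rfl⟩, rfl⟩, fun v hv => ?_⟩
  obtain ⟨b, hb, rfl⟩ := Finset.mem_image.1 hv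
  rw [Finset.mem_filter] at hb
  exact (Finset.mem_insert.1 (htu (Finset.mem_image_of_mem π hb.1))).resolve_left hb.2

lemma mem_upperClosure_image_of_notMem {T : Set (Finset VL)} {B : Finset VL}
    (hTB : ∀ t ∈ T, t ⊆ B) {a : VS} {u : Finset VS} (ha : a ∉ u)
    (hu : u ∈ upperClosure (Finset.image π '' T)) :
    u ∈ upperClosure (Finset.image π '' {t ∈ T | t ⊆ {b ∈ B | π b ≠ a}}) := by
  obtain ⟨_, ⟨t, ht, rfl⟩, htu⟩ := mem_upperClosure.1 hu
  refine mem_upperClosure.2 ⟨_, ⟨t, ⟨ht, fun b hb => ?_⟩, rfl⟩, htu⟩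
  refine Finset.mem_filter.2 ⟨hTB t ht hb, fun hba => ha ?_⟩
  exact hba ▸ htu (Finset.mem_image_of_mem π hb)

lemma union_filter_eq_mem_upperClosure [DecidableEq VL] {T : Set (Finset VL)} {B : Finset VL}
    (hTB : ∀ t ∈ T, t ⊆ B) {a : VS} {s : Finset VL}
    (hs : s ∈ upperClosure ((fun t : Finset VL => {b ∈ t | π b ≠ a}) '' T)) :
    s ∪ {b ∈ B | π b = a} ∈ upperClosure T := by
  obtain ⟨_, ⟨t, ht, rfl⟩, hts⟩ := mem_upperClosure.1 hs
  refine mem_upperClosure.2 ⟨t, ht, fun b hb => ?_⟩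
  by_cases hba : π b = a
  · exact Finset.mem_union_right _ (Finset.mem_filter.2 ⟨hTB t ht hb, hba⟩)
  · exact Finset.mem_union_left _ (hts (Finset.mem_filter.2 ⟨hb, hba⟩))

/-- Sites of `A` are revealed one at a time; the fibre of `a` in `B` meets every `t ∈ T` in at most
one site, so `bernProb_merge_le` applies to it. -/
lemma bernProb_image_le [DecidableEq VL] (hp : p ≤ 1) (A : Finset VS) {B : Finset VL}
    {T : Set (Finset VL)} (hTB : ∀ t ∈ T, t ⊆ B) (hT : ∀ t ∈ T, Set.InjOn π t) :
    bernProb p A (upperClosure (Finset.image π '' T)) ≤ bernProb p B (upperClosure T) := by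
  induction A using Finset.induction_on generalizing B T with
  | empty =>
    refine bernProb_empty_le hp B (upperClosure T).upper fun h => ?_
    obtain ⟨_, ⟨t, ht, rfl⟩, hts⟩ := mem_upperClosure.1 h
    rw [Finset.subset_empty, Finset.image_eq_empty] at hts
    exact subset_upperClosure (hts ▸ ht)
  | insert a A ha ih =>
    have hopen := ih (B := {b ∈ B | π b ≠ a}) (T := (fun t : Finset VL => {b ∈ t | π b ≠ a}) '' T)
      (by
        rintro _ ⟨t, ht, rfl⟩
        exact Finset.filter_subset_filter _ (hTB t ht))
      (by
        rintro _ ⟨t, ht, rfl⟩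
        exact (hT t ht).mono (Finset.filter_subset _ _))
    have hclosed := ih (B := {b ∈ B | π b ≠ a}) (T := {t ∈ T | t ⊆ {b ∈ B | π b ≠ a}})
      (fun t ht => ht.2) fun t ht => hT t ht.1
    have hmerge := bernProb_merge_le hp (Finset.disjoint_filter_filter_not B B _)
      (upperClosure T).upper fun s hs => by
        obtain ⟨t, ht, hts⟩ := mem_upperClosure.1 hs
        exact ⟨t, subset_upperClosure ht, hts, card_inter_filter_eq_le_one π (hT t ht) B a⟩
    rw [bernProb_insert ha, ← Finset.filter_union_filter_not_eq (fun b => π b = a) B]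
    refine le_trans ?_ hmerge
    gcongr
    · exact (bernProb_mono fun u _ hu => preimage_insert_upperClosure_image_subset π a T hu).trans
        (hopen.trans (bernProb_mono fun s _ hs => union_filter_eq_mem_upperClosure π hTB hs))
    · refine (bernProb_mono fun u hu hu' => ?_).trans
        (hclosed.trans (bernProb_mono fun s _ hs => ?_))
      · exact mem_upperClosure_image_of_notMem π hTB (fun h => ha (hu h)) hu'
      · obtain ⟨t, ht, hts⟩ := mem_upperClosure.1 hs
        exact mem_upperClosure.2 ⟨t, ht.1, hts⟩

end Image

lemma bern_singleton (b : Bool) : bern p {b} = if b then p else 1 - p := by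
  cases b <;> simp [bern]

lemma isProbabilityMeasure_bern (hp : p ≤ 1) : IsProbabilityMeasure (bern p) :=
  ⟨by simp [bern, add_tsub_cancel_of_le hp]⟩

lemma prod_bern_singleton_decide_mem {A s : Finset V} (hs : s ⊆ A) :
    ∏ a : A, bern p {decide ((a : V) ∈ s)} = bernWeight p A s := by
  simp only [bern_singleton, decide_eq_true_eq]
  rw [Finset.prod_coe_sort A (fun v => if v ∈ s then p else 1 - p), Finset.prod_ite,
    Finset.prod_const, Finset.prod_const, Finset.filter_mem_eq_inter,
    Finset.inter_eq_right.2 hs, ← Finset.sdiff_eq_filter, bernWeight]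

lemma measure_filter_mem_eq_bernProb (hp : p ≤ 1) {P : Measure (V → Bool)}
    (hP : iidMarginals p P) (A : Finset V) (E : Set (Finset V)) :
    P {ω | {v ∈ A | ω v} ∈ E} = bernProb p A E := by
  classical
  have := isProbabilityMeasure_bern hp
  let φ : (A → Bool) → Finset V := fun g => ({a | g a} : Finset A).map (.subtype _)
  let ψ : Finset V → (A → Bool) := fun s a => decide ((a : V) ∈ s)
  have hφψ : ∀ s ∈ A.powerset, φ (ψ s) = s := fun s hs => by
    ext v
    simpa [φ, ψ] using fun hv => Finset.mem_powerset.1 hs hv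
  have hφ : {ω : V → Bool | {v ∈ A | ω v} ∈ E} = (fun ω (a : A) => ω a) ⁻¹' (φ ⁻¹' E) := by
    ext ω
    change _ ∈ E ↔ _ ∈ E
    congr! 2
    ext v
    simp [φ, and_comm]
  rw [hφ, ← Measure.map_apply (measurable_pi_lambda _ fun a => measurable_pi_apply _)
    (Set.toFinite _).measurableSet, hP.2 A,
    show φ ⁻¹' E = ↑({g | φ g ∈ E} : Finset (A → Bool)) by ext; simp,
    ← sum_measure_singleton, Finset.sum_filter]
  refine (Finset.sum_nbij' ψ φ (fun _ _ => Finset.mem_univ _) (fun g _ => ?_) hφψ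
    (fun g _ => ?_) fun s hs => ?_).symm
  · refine Finset.mem_powerset.2 fun v hv => ?_
    obtain ⟨a, -, rfl⟩ := Finset.mem_map.1 hv
    exact a.2
  · funext a
    simp [φ, ψ]
  · rw [hφψ s hs, Measure.pi_singleton, prod_bern_singleton_decide_mem (Finset.mem_powerset.1 hs),
      Set.indicator_apply]

end FiniteWindow

lemma SimpleGraph.finite_setOf_exists_walk_length_le {V : Type*} (G : SimpleGraph V)
    [∀ v, Finite (G.neighborSet v)] (u : V) (n : ℕ) :
    {v | ∃ P : G.Walk u v, P.length ≤ n}.Finite := by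
  induction n generalizing u with
  | zero =>
    exact (Set.finite_singleton u).subset fun v ⟨P, hP⟩ =>
      (SimpleGraph.Walk.eq_of_length_eq_zero (Nat.le_zero.1 hP)).symm
  | succ n ih =>
    refine (((G.neighborSet u).toFinite.biUnion fun w _ => ih w).insert u).subset ?_
    rintro v ⟨P, hP⟩
    cases P with
    | nil => exact Set.mem_insert _ _
    | cons h Q =>
      exact Set.mem_insert_of_mem _ (Set.mem_iUnion₂.2 ⟨_, h, Q, by simpa using hP⟩)

lemma IsFibration.exists_walk_map_support_eq {VL VS : Type*} {Λ : SimpleGraph VL}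
    {S : SimpleGraph VS} {π : VL → VS} (hπ : IsFibration Λ S π) {u w : VS} (P : S.Walk u w)
    {y : VL} (hy : π y = u) :
    ∃ z, ∃ Q : Λ.Walk y z, Q.support.map π = P.support := by
  induction P generalizing y with
  | nil => exact ⟨y, .nil, by simp [hy]⟩
  | cons h P ih =>
    obtain ⟨y', hyy', rfl⟩ := hπ.2 y _ (hy ▸ h)
    obtain ⟨z, Q, hQ⟩ := ih rfl
    exact ⟨z, .cons hyy' Q, by simp [hQ, hy]⟩

section Lifts

variable {VL VS : Type*} [DecidableEq VL] {Λ : SimpleGraph VL} {S : SimpleGraph VS}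
  {π : VL → VS} {x : VL} {n : ℕ}

def liftedPathSupports (Λ : SimpleGraph VL) (π : VL → VS) (x : VL) (n : ℕ) : Set (Finset VL) :=
  {t | ∃ w, ∃ Q : Λ.Walk x w, Q.length = n ∧ (Q.support.map π).Nodup ∧ Q.support.toFinset = t}

lemma injOn_of_mem_liftedPathSupports {t : Finset VL} (ht : t ∈ liftedPathSupports Λ π x n) :
    Set.InjOn π t := by
  obtain ⟨w, Q, -, hQ, rfl⟩ := ht
  exact fun y hy y' hy' =>
    List.inj_on_of_nodup_map hQ (List.mem_toFinset.1 hy) (List.mem_toFinset.1 hy')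

lemma subset_of_mem_liftedPathSupports [∀ v, Finite (Λ.neighborSet v)] {t : Finset VL}
    (ht : t ∈ liftedPathSupports Λ π x n) :
    t ⊆ (Λ.finite_setOf_exists_walk_length_le x n).toFinset := by
  obtain ⟨w, Q, rfl, -, rfl⟩ := ht
  intro z hz
  rw [List.mem_toFinset] at hz
  simpa using ⟨_, Q.length_takeUntil_le_length hz⟩

lemma openSAP_of_mem_liftedPathSupports {ω : VL → Bool} {t : Finset VL}
    (ht : t ∈ liftedPathSupports Λ π x n) (hω : ∀ b ∈ t, ω b = true) : OpenSAP Λ ω x n := by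
  obtain ⟨w, Q, hlen, hQ, rfl⟩ := ht
  exact ⟨w, Q, .mk' (hQ.of_map π), hlen, fun u hu => hω u (List.mem_toFinset.2 hu)⟩

lemma IsFibration.exists_mem_liftedPathSupports (hπ : IsFibration Λ S π) {ω : VS → Bool}
    (hω : OpenSAP S ω (π x) n) :
    ∃ t ∈ liftedPathSupports Λ π x n, ∀ b ∈ t, ω (π b) = true := by
  obtain ⟨w, P, hP, rfl, hPω⟩ := hω
  obtain ⟨z, Q, hQ⟩ := hπ.exists_walk_map_support_eq P rfl
  have hlen : Q.length = P.length := by simpa using congrArg List.length hQ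
  refine ⟨_, ⟨z, Q, hlen, hQ ▸ hP.support_nodup, rfl⟩, fun b hb => hPω _ ?_⟩
  exact hQ ▸ List.mem_map_of_mem (List.mem_toFinset.1 hb)

end Lifts

theorem stmt16_general {VL VS : Type*}
    (Λ : SimpleGraph VL) (S : SimpleGraph VS)
    [∀ v, Fintype (Λ.neighborSet v)]
    (π : VL → VS) (hπ : IsFibration Λ S π)
    (o : VS) (x : VL) (hx : π x = o) (n : ℕ)
    (p : ENNReal) (hp : p ≤ 1)
    (PL : Measure (VL → Bool)) (PS : Measure (VS → Bool))
    (hPL : iidMarginals p PL) (hPS : iidMarginals p PS) :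
    PS {ω | OpenSAP S ω o n} ≤ PL {ω | OpenSAP Λ ω x n} := by
  classical
  let B := (Λ.finite_setOf_exists_walk_length_le x n).toFinset
  let T := liftedPathSupports Λ π x n
  have hS : {ω | OpenSAP S ω o n} ⊆
      {ω | {v ∈ B.image π | ω v} ∈ (upperClosure (Finset.image π '' T) : Set (Finset VS))} := by
    intro ω hω
    obtain ⟨t, ht, htω⟩ := hπ.exists_mem_liftedPathSupports (hx ▸ hω)
    refine mem_upperClosure.2 ⟨_, ⟨t, ht, rfl⟩, Finset.image_subset_iff.2 fun b hb => ?_⟩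
    exact Finset.mem_filter.2
      ⟨Finset.mem_image_of_mem π (subset_of_mem_liftedPathSupports ht hb), htω b hb⟩
  have hL : {ω | {v ∈ B | ω v} ∈ (upperClosure T : Set (Finset VL))} ⊆
      {ω | OpenSAP Λ ω x n} := fun ω hω => by
    obtain ⟨t, ht, htω⟩ := mem_upperClosure.1 hω
    exact openSAP_of_mem_liftedPathSupports ht fun b hb => (Finset.mem_filter.1 (htω hb)).2
  calc PS {ω | OpenSAP S ω o n}
      ≤ PS {ω | {v ∈ B.image π | ω v} ∈ (upperClosure (Finset.image π '' T) : Set _)} :=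
        measure_mono hS
    _ = bernProb p (B.image π) (upperClosure (Finset.image π '' T)) :=
        measure_filter_mem_eq_bernProb hp hPS _ _
    _ ≤ bernProb p B (upperClosure T) := bernProb_image_le π hp _
        (fun _ => subset_of_mem_liftedPathSupports) fun _ => injOn_of_mem_liftedPathSupports
    _ = PL {ω | {v ∈ B | ω v} ∈ (upperClosure T : Set _)} :=
        (measure_filter_mem_eq_bernProb hp hPL _ _).symm
    _ ≤ PL {ω | OpenSAP Λ ω x n} := measure_mono hL

/-- **Finite version of the Benjamini–Schramm comparison:** under `p`-site percolation,
the probability of an open self-avoiding path of length `n` from `x` in `Λ` is at least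
the probability of an open self-avoiding path of length `n` from `o` in `S`. -/
theorem stmt16 {VL VS : Type*} [Countable VL] [Countable VS] [Nonempty VS]
    (Λ : SimpleGraph VL) (S : SimpleGraph VS)
    [∀ v, Fintype (Λ.neighborSet v)] [∀ v, Fintype (S.neighborSet v)]
    (π : VL → VS) (hπ : IsFibration Λ S π)
    (o : VS) (x : VL) (hx : π x = o) (n : ℕ) (hn : 1 ≤ n)
    (p : ENNReal) (hp : p ≤ 1)
    (PL : Measure (VL → Bool)) (PS : Measure (VS → Bool))
    (hPL : iidMarginals p PL) (hPS : iidMarginals p PS) :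
    PS {ω | OpenSAP S ω o n} ≤ PL {ω | OpenSAP Λ ω x n} :=
  stmt16_general Λ S π hπ o x hx n p hp PL PS hPL hPS
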